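/- Consider the vector best response dynamic with bound W > 0 and targets w₁*, w₂* ∈ ℝⁿ, where each update projects onto the ℓ∞ ball 𝒲 = {w : ‖w‖∞ ≤ W} by coordinatewise clamping to [−W, W]. Assume w₁*, w₂* ∈ 𝒲. Then there exists T such that for all t ≥ T, the ensemble w₁ᵗ + w₂ᵗ equals the vector whose i-th coordinate is: 0 if w₁ᵢ* · w₂ᵢ* < 0; w₁ᵢ* if w₁ᵢ* · w₂ᵢ* ≥ 0 and |w₁ᵢ*| ≤ |w₂ᵢ*|; and w₂ᵢ* if w₁ᵢ* · w₂ᵢ* ≥ 0 and |w₂ᵢ*| < |w₁ᵢ*|. (This is the Nash-equilibrium ensemble predictor of the constrained linear regression game under the uncorrelated-features assumption, so the best response dynamic provably converges to it.) -/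
import Mathlib

/-- Clamp a real number to the interval `[−W, W]`. -/
noncomputable def clamp (W x : ℝ) : ℝ := max (-W) (min W x)

/-- Coordinatewise projection onto the `ℓ∞` ball of radius `W`. -/
noncomputable def projBall {n : ℕ} (W : ℝ) (x : Fin n → ℝ) : Fin n → ℝ :=
  fun i => clamp W (x i)

/-- The vector best response dynamic with bound `W` and targets `w₁*, w₂* ∈ ℝⁿ`:
`w₁⁰ = w₂⁰ = 0`; at odd steps environment 1 best-responds,
`w₁ᵗ = Π_𝒲 (w₁* − w₂ᵗ⁻¹)`; at even steps environment 2 best-responds,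
`w₂ᵗ = Π_𝒲 (w₂* − w₁ᵗ⁻¹)`, where `Π_𝒲` clamps each coordinate to `[−W, W]`. -/
noncomputable def brdVec {n : ℕ} (W : ℝ) (w₁ w₂ : Fin n → ℝ) :
    ℕ → (Fin n → ℝ) × (Fin n → ℝ)
  | 0 => (0, 0)
  | t + 1 =>
    let s := brdVec W w₁ w₂ t
    if (t + 1) % 2 = 1 then (projBall W (w₁ - s.2), s.2)
    else (s.1, projBall W (w₂ - s.1))

lemma clamp_eq_self {W y : ℝ} (h1 : -W ≤ y) (h2 : y ≤ W) : clamp W y = y := by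
  unfold clamp; rw [min_eq_right h2, max_eq_right h1]

lemma clamp_hi {W y : ℝ} (h0 : 0 ≤ W) (h : W ≤ y) : clamp W y = W := by
  unfold clamp; rw [min_eq_left h, max_eq_right (by linarith)]

lemma clamp_lo {W y : ℝ} (h0 : 0 ≤ W) (h : y ≤ -W) : clamp W y = -W := by
  unfold clamp; rw [min_eq_right (by linarith), max_eq_left (by linarith)]

/-- Scalar best-response sequence for environment 2 (value after `t` full rounds). -/
noncomputable def Bseq (W p q : ℝ) : ℕ → ℝ
  | 0 => 0
  | t + 1 => clamp W (q - clamp W (p - Bseq W p q t))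

lemma keyPos (W p q X : ℝ) (hW : 0 < W) (hp : |p| ≤ W) (hq : |q| ≤ W)
    (hd : 0 ≤ q - p) (hX : 0 ≤ X) :
    clamp W (q - clamp W (p - max (max q 0 - W) (min (min q 0 + W) X)))
      = max (max q 0 - W) (min (min q 0 + W) (X + (q - p))) := by
  obtain ⟨hp1, hp2⟩ := abs_le.mp hp
  obtain ⟨hq1, hq2⟩ := abs_le.mp hq
  rcases le_total q 0 with h | h
  · rw [max_eq_right h, min_eq_left h]
    rw [max_eq_right (le_min (by linarith) (by linarith) :
          (0:ℝ) - W ≤ min (q + W) X)]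
    rw [max_eq_right (le_min (by linarith) (by linarith) :
          (0:ℝ) - W ≤ min (q + W) (X + (q - p)))]
    rcases le_total X (q + W) with hx | hx
    · rw [min_eq_right hx]
      rcases le_total (-W) (p - X) with hin | hin
      · rw [clamp_eq_self hin (by linarith),
            min_eq_right (by linarith : X + (q - p) ≤ q + W),
            clamp_eq_self (by linarith) (by linarith)]
        ring
      · rw [clamp_lo hW.le hin, sub_neg_eq_add,
            min_eq_left (by linarith : q + W ≤ X + (q - p)),
            clamp_eq_self (by linarith) (by linarith)]
    · rw [min_eq_left hx,
          clamp_lo hW.le (by linarith : p - (q + W) ≤ -W), sub_neg_eq_add,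
          min_eq_left (by linarith : q + W ≤ X + (q - p)),
          clamp_eq_self (by linarith) (by linarith)]
  · rw [max_eq_left h, min_eq_right h]
    rcases le_total X (0 + W) with hx | hx
    · rw [min_eq_right hx, max_eq_right (by linarith : q - W ≤ X)]
      rcases le_total (-W) (p - X) with hin | hin
      · rw [clamp_eq_self hin (by linarith)]
        rcases le_total (q - (p - X)) W with hout | hout
        · rw [clamp_eq_self (by linarith) hout,
              min_eq_right (by linarith : X + (q - p) ≤ 0 + W),
              max_eq_right (by linarith : q - W ≤ X + (q - p))]
          ring
        · rw [clamp_hi hW.le hout,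
              min_eq_left (by linarith : 0 + W ≤ X + (q - p)),
              max_eq_right (by linarith : q - W ≤ 0 + W)]
          ring
      · rw [clamp_lo hW.le hin, sub_neg_eq_add,
            clamp_hi hW.le (by linarith : W ≤ q + W),
            min_eq_left (by linarith : 0 + W ≤ X + (q - p)),
            max_eq_right (by linarith : q - W ≤ 0 + W)]
        ring
    · rw [min_eq_left hx, max_eq_right (by linarith : q - W ≤ 0 + W)]
      rcases le_total (-W) (p - (0 + W)) with hin | hin
      · rw [clamp_eq_self hin (by linarith : p - (0 + W) ≤ W),
            clamp_hi hW.le (by linarith : W ≤ q - (p - (0 + W))),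
            min_eq_left (by linarith : 0 + W ≤ X + (q - p)),
            max_eq_right (by linarith : q - W ≤ 0 + W)]
        ring
      · rw [clamp_lo hW.le hin, sub_neg_eq_add,
            clamp_hi hW.le (by linarith : W ≤ q + W),
            min_eq_left (by linarith : 0 + W ≤ X + (q - p)),
            max_eq_right (by linarith : q - W ≤ 0 + W)]
        ring

lemma keyNeg (W p q X : ℝ) (hW : 0 < W) (hp : |p| ≤ W) (hq : |q| ≤ W)
    (hd : q - p ≤ 0) (hX : X ≤ 0) :
    clamp W (q - clamp W (p - max (max q 0 - W) (min (min q 0 + W) X)))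
      = max (max q 0 - W) (min (min q 0 + W) (X + (q - p))) := by
  obtain ⟨hp1, hp2⟩ := abs_le.mp hp
  obtain ⟨hq1, hq2⟩ := abs_le.mp hq
  rcases le_total q 0 with h | h
  · rw [max_eq_right h, min_eq_left h]
    rw [min_eq_right (by linarith : X ≤ q + W),
        min_eq_right (by linarith : X + (q - p) ≤ q + W)]
    rcases le_total (0 - W) X with hx | hx
    · rw [max_eq_right hx]
      rcases le_total (p - X) W with hin | hin
      · rw [clamp_eq_self (by linarith) hin]
        rcases le_total (-W) (q - (p - X)) with hout | hout
        · rw [clamp_eq_self hout (by linarith),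
              max_eq_right (by linarith : (0:ℝ) - W ≤ X + (q - p))]
          ring
        · rw [clamp_lo hW.le hout,
              max_eq_left (by linarith : X + (q - p) ≤ 0 - W)]
          ring
      · rw [clamp_hi hW.le hin,
            clamp_lo hW.le (by linarith : q - W ≤ -W),
            max_eq_left (by linarith : X + (q - p) ≤ 0 - W)]
        ring
    · rw [max_eq_left hx]
      rcases le_total (p - (0 - W)) W with hin | hin
      · rw [clamp_eq_self (by linarith : -W ≤ p - (0 - W)) hin,
            clamp_lo hW.le (by linarith : q - (p - (0 - W)) ≤ -W),
            max_eq_left (by linarith : X + (q - p) ≤ 0 - W)]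
        ring
      · rw [clamp_hi hW.le hin,
            clamp_lo hW.le (by linarith : q - W ≤ -W),
            max_eq_left (by linarith : X + (q - p) ≤ 0 - W)]
        ring
  · rw [max_eq_left h, min_eq_right h]
    rw [min_eq_right (by linarith : X ≤ 0 + W),
        min_eq_right (by linarith : X + (q - p) ≤ 0 + W)]
    rcases le_total (q - W) X with hx | hx
    · rw [max_eq_right hx]
      rcases le_total (p - X) W with hin | hin
      · rw [clamp_eq_self (by linarith) hin,
            clamp_eq_self (by linarith : -W ≤ q - (p - X)) (by linarith),
            max_eq_right (by linarith : q - W ≤ X + (q - p))]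
        ring
      · rw [clamp_hi hW.le hin,
            clamp_eq_self (by linarith : -W ≤ q - W) (by linarith),
            max_eq_left (by linarith : X + (q - p) ≤ q - W)]
    · rw [max_eq_left hx,
          clamp_hi hW.le (by linarith : W ≤ p - (q - W)),
          clamp_eq_self (by linarith : -W ≤ q - W) (by linarith),
          max_eq_left (by linarith : X + (q - p) ≤ q - W)]

lemma Bseq_eq (W p q : ℝ) (hW : 0 < W) (hp : |p| ≤ W) (hq : |q| ≤ W) (t : ℕ) :
    Bseq W p q t = max (max q 0 - W) (min (min q 0 + W) ((t : ℝ) * (q - p))) := by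
  obtain ⟨hq1, hq2⟩ := abs_le.mp hq
  induction t with
  | zero =>
    have h1 : max q 0 - W ≤ 0 := by
      rcases max_cases q 0 with ⟨e, _⟩ | ⟨e, _⟩ <;> rw [e] <;> linarith
    have h2 : (0:ℝ) ≤ min q 0 + W := by
      rcases min_cases q 0 with ⟨e, _⟩ | ⟨e, _⟩ <;> rw [e] <;> linarith
    show (0:ℝ) = _
    rw [Nat.cast_zero, zero_mul, min_eq_right h2, max_eq_right h1]
  | succ t ih =>
    show clamp W (q - clamp W (p - Bseq W p q t)) = _
    rw [ih, show ((t + 1 : ℕ) : ℝ) * (q - p) = (t : ℝ) * (q - p) + (q - p) by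
      push_cast; ring]
    rcases le_total 0 (q - p) with hd | hd
    · exact keyPos W p q _ hW hp hq hd (mul_nonneg (Nat.cast_nonneg t) hd)
    · exact keyNeg W p q _ hW hp hq hd
        (mul_nonpos_of_nonneg_of_nonpos (Nat.cast_nonneg t) hd)

/-- The limiting value of the scalar best-response sequence. -/
noncomputable def Binf (W p q : ℝ) : ℝ :=
  if 0 < q - p then min q 0 + W else if q - p < 0 then max q 0 - W else 0

lemma Bseq_stab (W p q : ℝ) (hW : 0 < W) (hp : |p| ≤ W) (hq : |q| ≤ W)
    {t : ℕ} (ht : ⌈2 * W / |q - p|⌉₊ ≤ t) :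
    Bseq W p q t = Binf W p q := by
  obtain ⟨hq1, hq2⟩ := abs_le.mp hq
  have hM1 : max q 0 ≤ W := max_le hq2 hW.le
  have hM0 : (0:ℝ) ≤ max q 0 := le_max_right q 0
  have hm1 : -W ≤ min q 0 := le_min hq1 (by linarith)
  have hm0 : min q 0 ≤ 0 := min_le_right q 0
  rw [Bseq_eq W p q hW hp hq]
  unfold Binf
  rcases lt_trichotomy (q - p) 0 with hd | hd | hd
  · rw [if_neg (by linarith), if_pos hd]
    have h1 : 2 * W / |q - p| ≤ (t : ℝ) := by
      calc 2 * W / |q - p| ≤ (⌈2 * W / |q - p|⌉₊ : ℝ) := Nat.le_ceil _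
      _ ≤ (t : ℝ) := by exact_mod_cast ht
    have h2 : 2 * W ≤ (t : ℝ) * |q - p| :=
      (div_le_iff₀ (abs_pos.mpr (by linarith))).mp h1
    rw [abs_of_neg hd, mul_neg] at h2
    rw [min_eq_right (by linarith : (t:ℝ) * (q - p) ≤ min q 0 + W),
        max_eq_left (by linarith : (t:ℝ) * (q - p) ≤ max q 0 - W)]
  · rw [if_neg (by linarith), if_neg (by linarith), hd, mul_zero,
        min_eq_right (by linarith : (0:ℝ) ≤ min q 0 + W),
        max_eq_right (by linarith : max q 0 - W ≤ 0)]
  · rw [if_pos hd]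
    have h1 : 2 * W / |q - p| ≤ (t : ℝ) := by
      calc 2 * W / |q - p| ≤ (⌈2 * W / |q - p|⌉₊ : ℝ) := Nat.le_ceil _
      _ ≤ (t : ℝ) := by exact_mod_cast ht
    have h2 : 2 * W ≤ (t : ℝ) * |q - p| :=
      (div_le_iff₀ (abs_pos.mpr (by linarith))).mp h1
    rw [abs_of_pos hd] at h2
    rw [min_eq_left (by linarith : min q 0 + W ≤ (t:ℝ) * (q - p)),
        max_eq_right (by linarith : max q 0 - W ≤ min q 0 + W)]

lemma sum_eq (W p q : ℝ) (hW : 0 < W) (hp : |p| ≤ W) (hq : |q| ≤ W) :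
    clamp W (p - Binf W p q) + Binf W p q
      = if p * q < 0 then 0 else if |p| ≤ |q| then p else q := by
  obtain ⟨hp1, hp2⟩ := abs_le.mp hp
  obtain ⟨hq1, hq2⟩ := abs_le.mp hq
  unfold Binf
  rcases lt_trichotomy (q - p) 0 with hd | hd | hd
  · rw [if_neg (by linarith), if_pos hd]
    rcases le_or_gt 0 q with hq0 | hq0
    · rw [max_eq_left hq0,
          if_neg (not_lt.mpr (mul_nonneg (by linarith) hq0)),
          clamp_hi hW.le (by linarith : W ≤ p - (q - W)),
          if_neg (by
            rw [abs_of_nonneg hq0, abs_of_nonneg (by linarith : (0:ℝ) ≤ p)]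
            exact not_le.mpr (by linarith))]
      ring
    · rw [max_eq_right hq0.le]
      rcases le_or_gt p 0 with hp0 | hp0
      · rw [if_neg (not_lt.mpr (by nlinarith : (0:ℝ) ≤ p * q)),
            clamp_eq_self (by linarith : -W ≤ p - (0 - W)) (by linarith),
            if_pos (by
              rw [abs_of_nonpos hp0, abs_of_neg hq0]; linarith)]
        ring
      · rw [if_pos (mul_neg_of_pos_of_neg hp0 hq0),
            clamp_hi hW.le (by linarith : W ≤ p - (0 - W))]
        ring
  · have hpq : p = q := by linarith
    rw [if_neg (by linarith), if_neg (by linarith),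
        if_neg (not_lt.mpr (by rw [hpq]; exact mul_self_nonneg q)),
        if_pos (le_of_eq (by rw [hpq])),
        clamp_eq_self (by linarith : -W ≤ p - 0) (by linarith)]
    ring
  · rw [if_pos hd]
    rcases le_or_gt q 0 with hq0 | hq0
    · rw [min_eq_left hq0,
          if_neg (not_lt.mpr (by nlinarith : (0:ℝ) ≤ p * q)),
          clamp_lo hW.le (by linarith : p - (q + W) ≤ -W),
          if_neg (by
            rw [abs_of_nonpos (by linarith : p ≤ 0), abs_of_nonpos hq0]
            exact not_le.mpr (by linarith))]
      ring
    · rw [min_eq_right hq0.le]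
      rcases le_or_gt 0 p with hp0 | hp0
      · rw [if_neg (not_lt.mpr (mul_nonneg hp0 hq0.le)),
            clamp_eq_self (by linarith : -W ≤ p - (0 + W)) (by linarith),
            if_pos (by rw [abs_of_nonneg hp0, abs_of_pos hq0]; linarith)]
        ring
      · rw [if_pos (mul_neg_of_neg_of_pos hp0 hq0),
            clamp_lo hW.le (by linarith : p - (0 + W) ≤ -W)]
        ring

lemma brdVec_odd {n : ℕ} (W : ℝ) (w₁ w₂ : Fin n → ℝ) :
    ∀ k, brdVec W w₁ w₂ (2*k+1)
      = (fun i => clamp W (w₁ i - Bseq W (w₁ i) (w₂ i) k),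
         fun i => Bseq W (w₁ i) (w₂ i) k)
  | 0 => by
    rw [show (2*0+1:ℕ) = 0 + 1 by ring, brdVec,
        if_pos (by norm_num : (0+1) % 2 = 1), brdVec]
    rfl
  | k + 1 => by
    have ih := brdVec_odd W w₁ w₂ k
    rw [show 2*(k+1)+1 = ((2*k+1)+1)+1 by ring, brdVec]
    rw [if_pos (by omega : (((2*k+1)+1)+1) % 2 = 1)]
    rw [brdVec, if_neg (by omega : ¬ ((2*k+1)+1) % 2 = 1)]
    rw [ih]
    rfl

lemma brdVec_even {n : ℕ} (W : ℝ) (w₁ w₂ : Fin n → ℝ) (k : ℕ) :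
    brdVec W w₁ w₂ (2*k+2)
      = (fun i => clamp W (w₁ i - Bseq W (w₁ i) (w₂ i) k),
         fun i => Bseq W (w₁ i) (w₂ i) (k+1)) := by
  rw [show 2*k+2 = (2*k+1)+1 from rfl, brdVec,
      if_neg (by omega : ¬ ((2*k+1)+1) % 2 = 1), brdVec_odd]
  rfl

/-- **Theorem 3 of the paper.** If `w₁*, w₂*` lie in the `ℓ∞` ball of
radius `W > 0`, then the vector best response dynamic eventually stabilizes with
ensemble `w₁ᵗ + w₂ᵗ` equal to the vector whose `i`-th coordinate is `0` when
`w₁ᵢ* w₂ᵢ* < 0`, and otherwise the least squares coefficient of smaller absolute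
value (ties going to `w₁ᵢ*`). -/
theorem brdVec_converges {n : ℕ} (W : ℝ) (hW : 0 < W) (w₁ w₂ : Fin n → ℝ)
    (hb₁ : ∀ i, |w₁ i| ≤ W) (hb₂ : ∀ i, |w₂ i| ≤ W) :
    ∃ T : ℕ, ∀ t ≥ T,
      (brdVec W w₁ w₂ t).1 + (brdVec W w₁ w₂ t).2 =
        fun i => if w₁ i * w₂ i < 0 then 0
          else if |w₁ i| ≤ |w₂ i| then w₁ i else w₂ i := by
  classical
  set N : Fin n → ℕ := fun i => ⌈2 * W / |w₂ i - w₁ i|⌉₊ with hN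
  set S : ℕ := Finset.univ.sup N with hS
  have hNS : ∀ i, N i ≤ S := fun i => Finset.le_sup (Finset.mem_univ i)
  refine ⟨2 * S + 1, fun t ht => ?_⟩
  rcases Nat.even_or_odd t with he | ho
  · obtain ⟨k, hk⟩ := he
    obtain ⟨m, hm⟩ : ∃ m, k = m + 1 := ⟨k - 1, by omega⟩
    have hmS : S ≤ m := by omega
    rw [show t = 2*m+2 by omega, brdVec_even]
    funext i
    simp only [Pi.add_apply]
    rw [Bseq_stab W (w₁ i) (w₂ i) hW (hb₁ i) (hb₂ i) (le_trans (hNS i) hmS),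
        Bseq_stab W (w₁ i) (w₂ i) hW (hb₁ i) (hb₂ i)
          (le_trans (hNS i) (by omega : S ≤ m + 1))]
    exact sum_eq W (w₁ i) (w₂ i) hW (hb₁ i) (hb₂ i)
  · obtain ⟨k, hk⟩ := ho
    have hkS : S ≤ k := by omega
    rw [show t = 2*k+1 by omega, brdVec_odd]
    funext i
    simp only [Pi.add_apply]
    rw [Bseq_stab W (w₁ i) (w₂ i) hW (hb₁ i) (hb₂ i) (le_trans (hNS i) hkS)]
    exact sum_eq W (w₁ i) (w₂ i) hW (hb₁ i) (hb₂ i)
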